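/- arXiv:2307.15869 — 2 statements merged into one kernel-verified Lean document; each statement's English description precedes it below -/
import Mathlib

section
/- Let X and Y be real vector spaces and let F : X ⇒ Y be a set-valued mapping. Then iri(gph(F)) ⊂ {(x,y) ∈ X × Y : x ∈ iri(dom(F)) and y ∈ iri(F(x))}. If in addition the graph gph(F) is a convex subset of X × Y, then equality holds: iri(gph(F)) = {(x,y) ∈ X × Y : x ∈ iri(dom(F)), y ∈ iri(F(x))}. -/
/-!
Projecting the graph cone `cone(gph F - (x, y))` to `X` gives `cone(dom F - x)`, and its fiber
over `0` is `cone(F x - y)`; both operations preserve linear subspaces, which gives the inclusion.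
For convex `F`, the cone of a convex set is closed under addition, so it is a subspace as soon as
it contains `(x, y) - (a, b)` for every `(a, b)` in the graph. Writing `x - a = t (a' - x)` with
`(a', b')` in the graph, the point `p = (t (a', b') + (a, b)) / (1 + t)` lies in the graph over
`x`, and `(x, y) - (a, b) = t ((a', b') - (x, y)) + (1 + t) ((x, y) - p)`, where the second term
comes from `y ∈ iri (F x)`.
-/

open Pointwise Set

/-- Conic hull: `cone(A) = {λa : λ ≥ 0, a ∈ A}`. -/
def coneHull {Z : Type*} [AddCommGroup Z] [Module ℝ Z] (A : Set Z) : Set Z :=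
  {y | ∃ c : ℝ, 0 ≤ c ∧ ∃ a ∈ A, y = c • a}

/-- A set is a linear subspace if it underlies some `ℝ`-submodule. -/
def IsLinearSubspace {Z : Type*} [AddCommGroup Z] [Module ℝ Z] (S : Set Z) : Prop :=
  ∃ L : Submodule ℝ Z, (L : Set Z) = S

/-- Intrinsic relative interior. -/
def iri {Z : Type*} [AddCommGroup Z] [Module ℝ Z] (A : Set Z) : Set Z :=
  {x ∈ A | IsLinearSubspace (coneHull (A - {x}))}

/-- Domain of a set-valued mapping. -/
def svmDom {X Y : Type*} (F : X → Set Y) : Set X := {x | (F x).Nonempty}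

/-- Graph of a set-valued mapping. -/
def svmGph {X Y : Type*} (F : X → Set Y) : Set (X × Y) := {p | p.2 ∈ F p.1}

section ConeHull

variable {E : Type*} [AddCommGroup E] [Module ℝ E]

lemma mem_coneHull_sub_singleton {A : Set E} {x v : E} :
    v ∈ coneHull (A - {x}) ↔ ∃ c : ℝ, 0 ≤ c ∧ ∃ a ∈ A, v = c • (a - x) := by
  simp only [coneHull, mem_ofPred_eq, sub_singleton, exists_mem_image]

lemma smul_mem_coneHull {C : Set E} {r : ℝ} {v : E} (hr : 0 ≤ r) (hv : v ∈ coneHull C) :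
    r • v ∈ coneHull C := by
  obtain ⟨c, hc, a, ha, rfl⟩ := hv
  exact ⟨r * c, mul_nonneg hr hc, a, ha, (mul_smul r c a).symm⟩

lemma zero_mem_coneHull {C : Set E} (hC : C.Nonempty) : (0 : E) ∈ coneHull C := by
  obtain ⟨a, ha⟩ := hC
  exact ⟨0, le_rfl, a, ha, (zero_smul ℝ a).symm⟩

lemma Convex.add_mem_coneHull {C : Set E} (hC : Convex ℝ C) {u v : E}
    (hu : u ∈ coneHull C) (hv : v ∈ coneHull C) : u + v ∈ coneHull C := by
  obtain ⟨c, hc, a, ha, rfl⟩ := hu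
  obtain ⟨d, hd, b, hb, rfl⟩ := hv
  rcases (add_nonneg hc hd).eq_or_lt with hcd | hcd
  · obtain ⟨rfl, rfl⟩ : c = 0 ∧ d = 0 := ⟨by linarith, by linarith⟩
    exact ⟨0, le_rfl, a, ha, by simp⟩
  · refine ⟨c + d, hcd.le, (c / (c + d)) • a + (d / (c + d)) • b,
      hC ha hb (div_nonneg hc hcd.le) (div_nonneg hd hcd.le) (by field_simp), ?_⟩
    rw [smul_add, smul_smul, smul_smul, mul_div_cancel₀ _ hcd.ne', mul_div_cancel₀ _ hcd.ne']

lemma coneHull_image {E' : Type*} [AddCommGroup E'] [Module ℝ E'] (f : E →ₗ[ℝ] E')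
    (C : Set E) : coneHull (f '' C) = f '' coneHull C := by
  ext w
  constructor
  · rintro ⟨c, hc, _, ⟨a, ha, rfl⟩, rfl⟩
    exact ⟨c • a, ⟨c, hc, a, ha, rfl⟩, map_smul f c a⟩
  · rintro ⟨_, ⟨c, hc, a, ha, rfl⟩, rfl⟩
    exact ⟨c, hc, f a, mem_image_of_mem f ha, map_smul f c a⟩

lemma Convex.isLinearSubspace_coneHull {C : Set E} (hC : Convex ℝ C) (hne : C.Nonempty)
    (hneg : ∀ v ∈ C, -v ∈ coneHull C) : IsLinearSubspace (coneHull C) := by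
  refine ⟨{ carrier := coneHull C
            add_mem' := hC.add_mem_coneHull
            zero_mem' := zero_mem_coneHull hne
            smul_mem' := fun r v hv => ?_ }, rfl⟩
  rcases le_or_gt 0 r with hr | hr
  · exact smul_mem_coneHull hr hv
  · obtain ⟨c, hc, a, ha, rfl⟩ := hv
    rw [smul_smul, show (r * c) • a = (-r * c) • -a by rw [smul_neg, neg_mul, neg_smul, neg_neg],
      ← smul_smul]
    exact smul_mem_coneHull (by linarith) (smul_mem_coneHull hc (hneg a ha))

end ConeHull

section IntrinsicRelativeInterior

variable {E : Type*} [AddCommGroup E] [Module ℝ E]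

lemma IsLinearSubspace.image {F : Type*} [AddCommGroup F] [Module ℝ F] {S : Set E}
    (hS : IsLinearSubspace S) (f : E →ₗ[ℝ] F) : IsLinearSubspace (f '' S) := by
  obtain ⟨L, rfl⟩ := hS
  exact ⟨L.map f, Submodule.map_coe f L⟩

lemma IsLinearSubspace.preimage {F : Type*} [AddCommGroup F] [Module ℝ F] {S : Set F}
    (hS : IsLinearSubspace S) (f : E →ₗ[ℝ] F) : IsLinearSubspace (f ⁻¹' S) := by
  obtain ⟨L, rfl⟩ := hS
  exact ⟨L.comap f, Submodule.comap_coe f L⟩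

lemma sub_mem_coneHull_of_mem_iri {A : Set E} {x a : E} (hx : x ∈ iri A) (ha : a ∈ A) :
    x - a ∈ coneHull (A - {x}) := by
  obtain ⟨-, L, hL⟩ := hx
  have hax : a - x ∈ (L : Set E) :=
    hL ▸ mem_coneHull_sub_singleton.2 ⟨1, zero_le_one, a, ha, by simp⟩
  rw [← hL, ← neg_sub]
  exact L.neg_mem hax

lemma Convex.mem_iri_of_forall_sub_mem_coneHull {A : Set E} (hA : Convex ℝ A) {x : E}
    (hx : x ∈ A) (h : ∀ a ∈ A, x - a ∈ coneHull (A - {x})) : x ∈ iri A := by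
  refine ⟨hx, (hA.sub (convex_singleton x)).isLinearSubspace_coneHull
    ⟨0, x, hx, x, rfl, sub_self x⟩ ?_⟩
  rintro _ ⟨a, ha, _, rfl, rfl⟩
  rw [neg_sub]
  exact h a ha

end IntrinsicRelativeInterior

section SetValuedMapping

variable {X Y : Type*} [AddCommGroup X] [Module ℝ X] [AddCommGroup Y] [Module ℝ Y]

lemma svmDom_sub_singleton (F : X → Set Y) (x : X) (y : Y) :
    svmDom F - {x} = LinearMap.fst ℝ X Y '' (svmGph F - {(x, y)}) := by
  ext v
  simp only [sub_singleton, mem_image, LinearMap.fst_apply, exists_exists_and_eq_and]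
  exact ⟨fun ⟨a, ⟨b, hb⟩, hv⟩ => ⟨(a, b), hb, hv⟩, fun ⟨p, hp, hv⟩ => ⟨p.1, ⟨p.2, hp⟩, hv⟩⟩

lemma coneHull_svmDom_sub_singleton (F : X → Set Y) (x : X) (y : Y) :
    coneHull (svmDom F - {x}) = LinearMap.fst ℝ X Y '' coneHull (svmGph F - {(x, y)}) := by
  rw [svmDom_sub_singleton F x y, coneHull_image]

lemma inr_preimage_coneHull_svmGph {F : X → Set Y} {x : X} {y : Y} (hy : y ∈ F x) :
    LinearMap.inr ℝ X Y ⁻¹' coneHull (svmGph F - {(x, y)}) = coneHull (F x - {y}) := by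
  ext v
  simp only [mem_preimage, LinearMap.inr_apply, mem_coneHull_sub_singleton]
  constructor
  · rintro ⟨c, hc, ⟨a, b⟩, hab, hv⟩
    simp only [Prod.ext_iff, Prod.smul_mk, Prod.mk_sub_mk] at hv
    obtain ⟨hax, rfl⟩ := hv
    rcases hc.eq_or_lt with rfl | hc
    · exact ⟨0, le_rfl, y, hy, by simp⟩
    · obtain rfl : a = x := sub_eq_zero.1 ((smul_eq_zero.1 hax.symm).resolve_left hc.ne')
      exact ⟨c, hc.le, b, hab, rfl⟩
  · rintro ⟨c, hc, b, hb, rfl⟩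
    exact ⟨c, hc, (x, b), hb, by simp⟩

theorem iri_svmGph_subset (F : X → Set Y) :
    iri (svmGph F) ⊆ {p : X × Y | p.1 ∈ iri (svmDom F) ∧ p.2 ∈ iri (F p.1)} := by
  rintro ⟨x, y⟩ ⟨hy, hcone⟩
  change y ∈ F x at hy
  refine ⟨⟨⟨y, hy⟩, ?_⟩, hy, ?_⟩
  · rw [coneHull_svmDom_sub_singleton F x y]
    exact hcone.image _
  · rw [← inr_preimage_coneHull_svmGph hy]
    exact hcone.preimage _

theorem mem_iri_svmGph_of_convex {F : X → Set Y} (hF : Convex ℝ (svmGph F)) {x : X} {y : Y}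
    (hx : x ∈ iri (svmDom F)) (hy : y ∈ iri (F x)) : (x, y) ∈ iri (svmGph F) := by
  refine hF.mem_iri_of_forall_sub_mem_coneHull hy.1 fun g hg => ?_
  obtain ⟨w, hw, hwx⟩ : x - g.1 ∈ LinearMap.fst ℝ X Y '' coneHull (svmGph F - {(x, y)}) := by
    rw [← coneHull_svmDom_sub_singleton F x y]
    exact sub_mem_coneHull_of_mem_iri hx ⟨g.2, hg⟩
  obtain ⟨t, ht, g', hg', rfl⟩ := mem_coneHull_sub_singleton.1 hw
  have ht1 : 0 < 1 + t := by linarith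
  set p := (1 + t)⁻¹ • (t • g' + g) with hp_def
  have hp : (1 + t) • p = t • g' + g := smul_inv_smul₀ ht1.ne' _
  have hpF : p ∈ svmGph F := by
    convert hF hg' hg (div_nonneg ht ht1.le) (inv_nonneg.2 ht1.le)
      (by field_simp; ring) using 1
    rw [hp_def, smul_add, smul_smul, div_eq_inv_mul]
  have hpx : p.1 = x := by
    have hp1 : (1 + t) • p.1 = t • g'.1 + g.1 := congrArg Prod.fst hp
    simp only [LinearMap.fst_apply, Prod.smul_fst, Prod.fst_sub] at hwx
    refine smul_right_injective X ht1.ne' (hp1.trans ?_)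
    linear_combination (norm := module) hwx
  have hfiber : (x, y) - p ∈ coneHull (svmGph F - {(x, y)}) := by
    have hyp : y - p.2 ∈ coneHull (F x - {y}) :=
      sub_mem_coneHull_of_mem_iri hy (hpx ▸ hpF)
    rw [← inr_preimage_coneHull_svmGph hy.1] at hyp
    have hxp : (x, y) - p = LinearMap.inr ℝ X Y (y - p.2) := by ext <;> simp [hpx]
    rwa [hxp]
  have hsplit : (x, y) - g = t • (g' - (x, y)) + (1 + t) • ((x, y) - p) := by
    rw [smul_sub (1 + t), hp]
    module
  rw [hsplit]
  exact (hF.sub (convex_singleton _)).add_mem_coneHull hw (smul_mem_coneHull ht1.le hfiber)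

end SetValuedMapping

theorem stmt11 {X Y : Type*} [AddCommGroup X] [Module ℝ X] [AddCommGroup Y] [Module ℝ Y]
    (F : X → Set Y) :
    iri (svmGph F) ⊆ {p : X × Y | p.1 ∈ iri (svmDom F) ∧ p.2 ∈ iri (F p.1)} ∧
    (Convex ℝ (svmGph F) →
      iri (svmGph F) = {p : X × Y | p.1 ∈ iri (svmDom F) ∧ p.2 ∈ iri (F p.1)}) :=
  ⟨iri_svmGph_subset F, fun hF =>
    (iri_svmGph_subset F).antisymm fun _ hp => mem_iri_svmGph_of_convex hF hp.1 hp.2⟩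
end

section
/- Let X be a real locally convex topological vector space, let Ω ⊂ X be a quasi-nearly convex set, and let x̄ ∈ Ω. Then x̄ ∈ qri(Ω) if and only if the normal cone N(x̄; Ω) is a linear subspace of the topological dual X*. -/
/-! Let `K` be the closure of `cone(Ω - x̄)`; the normal cone `N(x̄; Ω)` consists of the functionals
that are nonpositive on `K`. Since `C ⊆ Ω ⊆ cl C` with `C` convex, `K` is also the closure of the
convex cone generated by `C - x̄`, so it is a closed convex cone. If `K` is a subspace, `N(x̄; Ω)` is
its annihilator. Conversely, separating points from the closed convex cone `K` (Farkas' lemma)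
shows that every point annihilated by `N(x̄; Ω)` lies in `K`; when `N(x̄; Ω)` is a subspace, each of
its functionals is nonpositive on `K` together with its negative, so `K` is exactly the common
kernel of `N(x̄; Ω)`. -/

open Pointwise Set

/-- Quasi-relative interior. -/
def qri {Z : Type*} [AddCommGroup Z] [Module ℝ Z] [TopologicalSpace Z] (A : Set Z) : Set Z :=
  {x ∈ A | IsLinearSubspace (closure (coneHull (A - {x})))}

/-- A set is quasi-nearly convex if it is squeezed between a convex set with
nonempty quasi-relative interior and its closure. -/
def QuasiNearlyConvex {Z : Type*} [AddCommGroup Z] [Module ℝ Z] [TopologicalSpace Z]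
    (A : Set Z) : Prop :=
  ∃ C : Set Z, Convex ℝ C ∧ (qri C).Nonempty ∧ C ⊆ A ∧ A ⊆ closure C

/-- The normal cone to a set at a point, as a subset of the topological dual. -/
def normalCone {Z : Type*} [AddCommGroup Z] [Module ℝ Z] [TopologicalSpace Z]
    (A : Set Z) (xbar : Z) : Set (Z →L[ℝ] ℝ) :=
  {f | ∀ x ∈ A, f (x - xbar) ≤ 0}

section ConeHull

variable {X : Type*} [AddCommGroup X] [Module ℝ X] {A : Set X}

lemma subset_coneHull : A ⊆ coneHull A :=
  fun a ha => ⟨1, zero_le_one, a, ha, (one_smul ℝ a).symm⟩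

lemma coneHull_subset_pointedCone {P : PointedCone ℝ X} (h : A ⊆ P) : coneHull A ⊆ P := by
  rintro _ ⟨c, hc, a, ha, rfl⟩
  exact P.smul_mem hc (h ha)

end ConeHull

section NormalCone

variable {X : Type*} [AddCommGroup X] [Module ℝ X] [TopologicalSpace X]

lemma normalCone_closure_coneHull_sub [IsTopologicalAddGroup X] [ContinuousSMul ℝ X]
    (Ω : Set X) (xbar : X) :
    normalCone (closure (coneHull (Ω - {xbar}))) 0 = normalCone Ω xbar := by
  ext f
  simp only [normalCone, sub_zero, mem_ofPred_eq]
  refine ⟨fun hf x hx => hf _ (subset_closure (subset_coneHull (sub_mem_sub hx rfl))),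
    fun hf => ?_⟩
  let H : ProperCone ℝ X := (ProperCone.positive ℝ ℝ).comap (-f)
  have hΩ : Ω - {xbar} ⊆ H := by
    rintro _ ⟨x, hx, _, rfl, rfl⟩
    simpa [H] using hf x hx
  intro y hy
  simpa [H] using
    closure_minimal (coneHull_subset_pointedCone (P := (H : PointedCone ℝ X)) hΩ) H.isClosed hy

lemma apply_eq_zero_of_isLinearSubspace_normalCone {A : Set X}
    (hN : IsLinearSubspace (normalCone A 0)) {f : X →L[ℝ] ℝ} (hf : f ∈ normalCone A 0) {y : X}
    (hy : y ∈ A) : f y = 0 := by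
  obtain ⟨N, hN⟩ := hN
  have hf' : -f ∈ normalCone A 0 := by
    rw [← hN] at hf ⊢
    exact N.neg_mem hf
  exact le_antisymm (by simpa using hf y hy) (by simpa using hf' y hy)

lemma normalCone_submodule_zero (L : Submodule ℝ X) (f : X →L[ℝ] ℝ) :
    f ∈ normalCone (L : Set X) 0 ↔ ∀ y ∈ L, f y = 0 := by
  simp only [normalCone, sub_zero, mem_ofPred_eq, SetLike.mem_coe]
  refine ⟨fun hf y hy => le_antisymm (hf y hy) ?_, fun hf y hy => (hf y hy).le⟩
  simpa using hf (-y) (L.neg_mem hy)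

lemma isLinearSubspace_normalCone_submodule (L : Submodule ℝ X) :
    IsLinearSubspace (normalCone (L : Set X) 0) := by
  refine ⟨L.dualAnnihilator.comap (ContinuousLinearMap.coeLM ℝ), ?_⟩
  ext f
  simp [normalCone_submodule_zero, Submodule.mem_dualAnnihilator]

end NormalCone

section ProperCone

variable {X : Type*} [AddCommGroup X] [Module ℝ X] [TopologicalSpace X]
  [IsTopologicalAddGroup X] [ContinuousSMul ℝ X]

lemma exists_properCone_eq_closure_coneHull_sub {C Ω : Set X} (hC : Convex ℝ C) (hCΩ : C ⊆ Ω)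
    (hΩC : Ω ⊆ closure C) {xbar : X} (hxbar : xbar ∈ Ω) :
    ∃ K : ProperCone ℝ X, (K : Set X) = closure (coneHull (Ω - {xbar})) := by
  set T := ConvexCone.hull ℝ (C - {xbar})
  have hΩT : Ω - {xbar} ⊆ closure T := by
    rw [sub_singleton]
    rintro _ ⟨x, hx, rfl⟩
    exact closure_mono ConvexCone.subset_hull <|
      map_mem_closure (f := (· - xbar)) (continuous_sub_right xbar) (hΩC hx)
        fun c hc => sub_mem_sub hc rfl
  have hTΩ : (T : Set X) ⊆ coneHull (Ω - {xbar}) := by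
    intro x hx
    obtain ⟨r, hr, y, hy, rfl⟩ :=
      (ConvexCone.mem_hull_of_convex (hC.sub (convex_singleton _))).1 hx
    exact ⟨r, hr.le, y, sub_subset_sub_right hCΩ hy, rfl⟩
  lift T.closure to ProperCone ℝ X using ⟨⟨0, sub_self xbar ▸ hΩT (sub_mem_sub hxbar rfl)⟩,
    isClosed_closure⟩ with K hK
  have hK' : (K : Set X) = closure T := congrArg SetLike.coe hK
  refine ⟨K, subset_antisymm (hK' ▸ closure_mono hTΩ) ?_⟩
  rw [← hK'] at hΩT
  exact closure_minimal (coneHull_subset_pointedCone (P := (K : PointedCone ℝ X)) hΩT) K.isClosed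

lemma ProperCone.mem_of_forall_normalCone_apply_eq_zero [LocallyConvexSpace ℝ X]
    (K : ProperCone ℝ X) {x : X} (hx : ∀ f ∈ normalCone (K : Set X) 0, f x = 0) : x ∈ K := by
  by_contra hxK
  obtain ⟨g, hgK, hgx⟩ := K.hyperplane_separation_point hxK
  have hg : -g ∈ normalCone (K : Set X) 0 := fun y hy => by simpa using hgK y hy
  exact hgx.ne (by simpa using hx (-g) hg)

lemma ProperCone.isLinearSubspace_of_isLinearSubspace_normalCone [LocallyConvexSpace ℝ X]
    (K : ProperCone ℝ X) (hN : IsLinearSubspace (normalCone (K : Set X) 0)) :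
    IsLinearSubspace (K : Set X) := by
  refine ⟨⨅ f ∈ normalCone (K : Set X) 0, LinearMap.ker (f : X →ₗ[ℝ] ℝ), ?_⟩
  ext x
  simp only [SetLike.mem_coe, Submodule.mem_iInf, LinearMap.mem_ker, ContinuousLinearMap.coe_coe]
  exact ⟨K.mem_of_forall_normalCone_apply_eq_zero,
    fun hx _ hf => apply_eq_zero_of_isLinearSubspace_normalCone hN hf hx⟩

end ProperCone

theorem stmt14 {X : Type*} [AddCommGroup X] [Module ℝ X] [TopologicalSpace X]
    [IsTopologicalAddGroup X] [ContinuousSMul ℝ X] [LocallyConvexSpace ℝ X]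
    (Ω : Set X) (h : QuasiNearlyConvex Ω) (xbar : X) (hxbar : xbar ∈ Ω) :
    xbar ∈ qri Ω ↔ IsLinearSubspace (normalCone Ω xbar) := by
  obtain ⟨C, hC, -, hCΩ, hΩC⟩ := h
  obtain ⟨K, hK⟩ := exists_properCone_eq_closure_coneHull_sub hC hCΩ hΩC hxbar
  rw [qri, mem_sep_iff, and_iff_right hxbar, ← normalCone_closure_coneHull_sub, ← hK]
  exact ⟨fun ⟨L, hL⟩ => hL ▸ isLinearSubspace_normalCone_submodule L,
    K.isLinearSubspace_of_isLinearSubspace_normalCone⟩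
end
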